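/- Let Σ̃ and Σ be p×p symmetric PSD matrices and λ > 0 with λ ≥ 2‖Σ̃ − Σ‖_∞. Let Σ̂ = argmin_{S ∈ 𝒮_p} ‖Σ̃ − S‖₂² + λ‖S‖₁. Then ‖Σ̂ − Σ‖_∞ ≤ λ. -/

import Mathlib

open Matrix

/-- Operator (spectral) norm of a real square matrix, via its action on Euclidean space. -/
noncomputable def opN {p : ℕ} (A : Matrix (Fin p) (Fin p) ℝ) : ℝ :=
  ‖Matrix.toEuclideanCLM (𝕜 := ℝ) A‖

/-- Squared Frobenius norm. -/
def frobSq {p : ℕ} (M : Matrix (Fin p) (Fin p) ℝ) : ℝ := (Mᵀ * M).trace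

/-- Nuclear norm (sum of singular values) of a real square matrix: trace of √(AᵀA). -/
noncomputable def nucN {p : ℕ} (A : Matrix (Fin p) (Fin p) ℝ) : ℝ :=
  ((Matrix.posSemidef_conjTranspose_mul_self A).1.eigenvectorUnitary.1 *
    diagonal ((RCLike.ofReal : ℝ → ℝ) ∘ (Real.sqrt ·) ∘ (Matrix.posSemidef_conjTranspose_mul_self A).1.eigenvalues) *
    (star (Matrix.posSemidef_conjTranspose_mul_self A).1.eigenvectorUnitary :
      Matrix (Fin p) (Fin p) ℝ)).trace

/-!
The minimiser `Ŝ` is the spectral soft-thresholding of `Σ̃` at level `λ/2`; all that is needed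
is its consequence `0 ≤ Σ̃ - Ŝ ≤ λ/2`, hence `‖Ŝ - Σ̃‖_∞ ≤ λ/2`, after which the triangle inequality
and `‖Σ̃ - Σ‖_∞ ≤ λ/2` finish. Both bounds come from first-order optimality on the PSD cone
(where the nuclear norm is the trace): perturbing `Ŝ` by `t xxᵀ` gives `2 (Σ̃ - Ŝ) ≤ λ`, and
perturbing along `±Ŝ` gives `tr ((λ - 2 (Σ̃ - Ŝ)) Ŝ) = 0`, hence `(Σ̃ - Ŝ) Ŝ = (λ/2) Ŝ`.
Conjugating `Σ̃ - Ŝ` by the invertible `Ŝ + λ` then yields the PSD matrix `(λ/2) Ŝ² + λ² Σ̃`.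
-/

open Filter Topology Set

lemma nonneg_of_forall_mem_Ioo_nonneg_add_mul {a b : ℝ}
    (h : ∀ t ∈ Ioo (0 : ℝ) 1, 0 ≤ a + t * b) : 0 ≤ a := by
  have hlim : Tendsto (fun t => a + t * b) (𝓝[>] 0) (𝓝 a) := by
    have : Continuous fun t : ℝ => a + t * b := by fun_prop
    simpa using (this.tendsto 0).mono_left nhdsWithin_le_nhds
  refine ge_of_tendsto hlim ?_
  filter_upwards [Ioo_mem_nhdsGT (zero_lt_one' ℝ)] using h

namespace Matrix.PosSemidef

open scoped MatrixOrder ComplexOrder in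
theorem mul_eq_zero_of_trace_mul_eq_zero {n 𝕜 : Type*} [Fintype n] [DecidableEq n] [RCLike 𝕜]
    {A B : Matrix n n 𝕜} (hA : A.PosSemidef) (hB : B.PosSemidef) (h : (A * B).trace = 0) :
    A * B = 0 := by
  -- with `R = √A`, `T = √B` one has `tr (A B) = tr ((R T)ᴴ (R T))`
  set R := CFC.sqrt A
  set T := CFC.sqrt B
  have hR : Rᴴ = R := (CFC.sqrt_nonneg A).isSelfAdjoint
  have hT : Tᴴ = T := (CFC.sqrt_nonneg B).isSelfAdjoint
  have hRR : R * R = A := CFC.sqrt_mul_sqrt_self A hA.nonneg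
  have hTT : T * T = B := CFC.sqrt_mul_sqrt_self B hB.nonneg
  have hRT : R * T = 0 := by
    rw [← trace_conjTranspose_mul_self_eq_zero_iff, ← h, conjTranspose_mul, hR, hT, ← hRR, ← hTT,
      Matrix.mul_assoc, trace_mul_comm T]
    simp only [Matrix.mul_assoc]
  rw [← hRR, ← hTT, Matrix.mul_assoc, ← Matrix.mul_assoc R T, hRT, zero_mul, mul_zero]

lemma transpose_eq {n : Type*} {A : Matrix n n ℝ} (hA : A.PosSemidef) : Aᵀ = A :=
  (isHermitian_iff_isSymm.mp hA.1).eq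

end Matrix.PosSemidef

lemma Matrix.posSemidef_sub_of_sub_mul_eq_smul {n : Type*} [Fintype n] [DecidableEq n]
    {C S : Matrix n n ℝ} {c : ℝ} (hC : C.PosSemidef) (hS : S.PosSemidef) (hc : 0 < c)
    (h : (C - S) * S = c • S) : (C - S).PosSemidef := by
  have hSD : S * (C - S) = c • S := by
    simpa [hC.transpose_eq, hS.transpose_eq] using congrArg transpose h
  set U := S + (2 * c) • (1 : Matrix n n ℝ)
  have hU : IsUnit U := (PosDef.posSemidef_add hS (PosDef.one.smul (by positivity))).isUnit
  have hUU : star U * (C - S) * U = c • (Sᴴ * S) + (4 * c ^ 2) • C := by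
    simp only [U, star_add, star_smul, star_one, star_trivial, star_eq_conjTranspose, hS.1.eq,
      add_mul, mul_add, h, smul_mul, Matrix.mul_smul, Matrix.one_mul, Matrix.mul_one, hSD]
    module
  rw [← hU.posSemidef_star_left_conjugate_iff, hUU]
  exact ((posSemidef_conjTranspose_mul_self S).smul hc.le).add (hC.smul (by positivity))

section

variable {p : ℕ}

open scoped MatrixOrder in
lemma nucN_eq_trace {A : Matrix (Fin p) (Fin p) ℝ} (hA : A.PosSemidef) : nucN A = A.trace := by
  have hAA := posSemidef_conjTranspose_mul_self A
  have h : CFC.sqrt (Aᴴ * A) = A := by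
    rw [hA.1.eq]
    exact CFC.sqrt_mul_self A hA.nonneg
  rw [CFC.sqrt_eq_real_sqrt _ hAA.nonneg, cfcₙ_eq_cfc, hAA.1.cfc_eq] at h
  calc nucN A = (hAA.1.cfc Real.sqrt).trace := rfl
    _ = A.trace := by rw [h]

lemma opN_le_of_posSemidef {A : Matrix (Fin p) (Fin p) ℝ} {c : ℝ} (hc : 0 ≤ c)
    (hA : A.PosSemidef) (hcA : (c • 1 - A).PosSemidef) : opN A ≤ c := by
  have hApos := isPositive_toEuclideanLin_iff.mpr hA
  rw [opN, ContinuousLinearMap.norm_eq_iSup_rayleighQuotient _ hApos.isSymmetric]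
  refine ciSup_le fun x => ?_
  have h0 := hApos.re_inner_nonneg_left x
  have h1 := (isPositive_toEuclideanLin_iff.mpr hcA).re_inner_nonneg_left x
  simp only [RCLike.re_to_real, map_sub, map_smul, toLpLin_one, LinearMap.sub_apply,
    LinearMap.smul_apply, LinearMap.id_coe, id_eq, inner_sub_left, inner_smul_left,
    Real.ringHom_apply, inner_self_eq_norm_sq_to_K, sub_nonneg] at h0 h1
  change |inner ℝ (toEuclideanLin A x) x / ‖x‖ ^ 2| ≤ c
  rw [abs_div, abs_of_nonneg h0, abs_sq]
  exact div_le_of_le_mul₀ (sq_nonneg _) hc h1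

lemma opN_sub_le (A B C : Matrix (Fin p) (Fin p) ℝ) :
    opN (A - C) ≤ opN (A - B) + opN (B - C) := by
  simp only [opN, map_sub]
  exact norm_sub_le_norm_sub_add_norm_sub _ _ _

lemma opN_sub_comm (A B : Matrix (Fin p) (Fin p) ℝ) : opN (A - B) = opN (B - A) := by
  simp only [opN, map_sub]
  exact norm_sub_rev _ _

lemma frobSq_sub_smul (X Y : Matrix (Fin p) (Fin p) ℝ) (t : ℝ) :
    frobSq (X - t • Y) = frobSq X - 2 * t * (Xᵀ * Y).trace + t ^ 2 * frobSq Y := by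
  have h : (Yᵀ * X).trace = (Xᵀ * Y).trace := by
    rw [← trace_transpose, transpose_mul, transpose_transpose]
  simp only [frobSq, transpose_sub, transpose_smul, sub_mul, mul_sub, smul_mul, Matrix.mul_smul,
    trace_sub, trace_smul, smul_smul, smul_eq_mul, h]
  ring

def IsNuclearPenalizedMin (lam : ℝ) (C S : Matrix (Fin p) (Fin p) ℝ) : Prop :=
  ∀ S' : Matrix (Fin p) (Fin p) ℝ, S'.PosSemidef →
    frobSq (C - S) + lam * nucN S ≤ frobSq (C - S') + lam * nucN S'

namespace IsNuclearPenalizedMin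

variable {lam : ℝ} {C S : Matrix (Fin p) (Fin p) ℝ}

lemma two_mul_trace_le (hmin : IsNuclearPenalizedMin lam C S) (hS : S.PosSemidef)
    {X : Matrix (Fin p) (Fin p) ℝ} (hX : ∀ t ∈ Ioo (0 : ℝ) 1, (S + t • X).PosSemidef) :
    2 * ((C - S)ᵀ * X).trace ≤ lam * X.trace := by
  suffices 0 ≤ lam * X.trace - 2 * ((C - S)ᵀ * X).trace by linarith
  refine nonneg_of_forall_mem_Ioo_nonneg_add_mul (b := frobSq X) fun t ht => ?_
  have h := hmin _ (hX t ht)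
  rw [nucN_eq_trace hS, nucN_eq_trace (hX t ht), show C - (S + t • X) = (C - S) - t • X by abel,
    frobSq_sub_smul, trace_add, trace_smul, smul_eq_mul] at h
  have : 0 ≤ t * (lam * X.trace - 2 * ((C - S)ᵀ * X).trace + t * frobSq X) := by
    linear_combination h
  exact nonneg_of_mul_nonneg_right this ht.1

lemma posSemidef_smul_one_sub (hmin : IsNuclearPenalizedMin lam C S) (hC : C.PosSemidef)
    (hS : S.PosSemidef) : (lam • 1 - (2 : ℝ) • (C - S)).PosSemidef := by
  have hD : (C - S)ᵀ = C - S := by rw [transpose_sub, hC.transpose_eq, hS.transpose_eq]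
  refine posSemidef_iff_dotProduct_mulVec.mpr ⟨?_, fun x => ?_⟩
  · simp [isHermitian_iff_isSymm, IsSymm, hD]
  have h := hmin.two_mul_trace_le hS (X := vecMulVec x x) fun t ht =>
    hS.add ((posSemidef_vecMulVec_self_star x).smul ht.1.le)
  rw [hD, mul_vecMulVec, trace_vecMulVec, trace_vecMulVec, dotProduct_comm] at h
  simp only [star_trivial, sub_mulVec, smul_mulVec, one_mulVec, dotProduct_sub, dotProduct_smul,
    smul_eq_mul] at h ⊢
  linarith

lemma sub_mul_eq_smul (hmin : IsNuclearPenalizedMin lam C S) (hC : C.PosSemidef)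
    (hS : S.PosSemidef) : (C - S) * S = (lam / 2) • S := by
  have hD : (C - S)ᵀ = C - S := by rw [transpose_sub, hC.transpose_eq, hS.transpose_eq]
  have hgrow := hmin.two_mul_trace_le hS (X := S) fun t ht => by
    rw [show S + t • S = (1 + t) • S by module]
    exact hS.smul (by linarith [ht.1])
  have hshrink := hmin.two_mul_trace_le hS (X := -S) fun t ht => by
    rw [show S + t • -S = (1 - t) • S by module]
    exact hS.smul (by linarith [ht.2])
  rw [hD] at hgrow hshrink
  rw [mul_neg, trace_neg, trace_neg] at hshrink
  -- complementary slackness: `tr ((λ - 2 (C - S)) S) = 0` with both factors PSD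
  have hMS := (hmin.posSemidef_smul_one_sub hC hS).mul_eq_zero_of_trace_mul_eq_zero hS (by
    rw [sub_mul, smul_mul, smul_mul, Matrix.one_mul, trace_sub, trace_smul, trace_smul,
      smul_eq_mul, smul_eq_mul]
    linarith)
  rw [sub_mul, smul_mul, smul_mul, Matrix.one_mul, sub_eq_zero] at hMS
  linear_combination (norm := module) -(2 : ℝ)⁻¹ • hMS

end IsNuclearPenalizedMin

end

theorem stmt14_general {p : ℕ} (SigTilde Sig Sighat : Matrix (Fin p) (Fin p) ℝ)
    (hSigTilde : SigTilde.PosSemidef)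
    (lam : ℝ) (hlam0 : 0 < lam) (hlam : 2 * opN (SigTilde - Sig) ≤ lam)
    (hhat : Sighat.PosSemidef)
    (hmin : ∀ S : Matrix (Fin p) (Fin p) ℝ, S.PosSemidef →
      frobSq (SigTilde - Sighat) + lam * nucN Sighat ≤ frobSq (SigTilde - S) + lam * nucN S) :
    opN (Sighat - Sig) ≤ lam := by
  have hmin : IsNuclearPenalizedMin lam SigTilde Sighat := hmin
  have hlower : (SigTilde - Sighat).PosSemidef :=
    posSemidef_sub_of_sub_mul_eq_smul hSigTilde hhat (half_pos hlam0)
      (hmin.sub_mul_eq_smul hSigTilde hhat)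
  have hupper : ((lam / 2) • 1 - (SigTilde - Sighat)).PosSemidef := by
    convert (hmin.posSemidef_smul_one_sub hSigTilde hhat).smul (a := (2 : ℝ)⁻¹) (by norm_num)
      using 1
    module
  have hthreshold : opN (SigTilde - Sighat) ≤ lam / 2 :=
    opN_le_of_posSemidef (half_pos hlam0).le hlower hupper
  calc opN (Sighat - Sig) ≤ opN (Sighat - SigTilde) + opN (SigTilde - Sig) := opN_sub_le _ _ _
    _ ≤ lam := by rw [opN_sub_comm]; linarith

theorem stmt14 {p : ℕ} (SigTilde Sig Sighat : Matrix (Fin p) (Fin p) ℝ)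
    (hSigTilde : SigTilde.PosSemidef) (hSig : Sig.PosSemidef)
    (lam : ℝ) (hlam0 : 0 < lam) (hlam : 2 * opN (SigTilde - Sig) ≤ lam)
    (hhat : Sighat.PosSemidef)
    (hmin : ∀ S : Matrix (Fin p) (Fin p) ℝ, S.PosSemidef →
      frobSq (SigTilde - Sighat) + lam * nucN Sighat ≤ frobSq (SigTilde - S) + lam * nucN S) :
    opN (Sighat - Sig) ≤ lam :=
  stmt14_general SigTilde Sig Sighat hSigTilde lam hlam0 hlam hhat hmin
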